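/- Let K > 0 and let f_k, g_k : ℝⁿ → ℝ be C¹ functions, all K-Lipschitz, such that f_k → f and g_k → g uniformly on ℝⁿ. Then for every smooth compactly supported function η : ℝⁿ → ℝ and every vector w ∈ ℝⁿ, the integrals ∫_{ℝⁿ} f_k(x)·(Dg_k(x)w)·η(x) dx converge to ∫_{ℝⁿ} f(x)·(Dg(x)w)·η(x) dx, where Dg denotes the Lebesgue-almost-everywhere defined derivative of the Lipschitz limit g (which exists a.e. by Rademacher's theorem). -/

import Mathlib

/-!
Write `f_k (Dg_k w) η = (f_k - f) (Dg_k w) η + f (Dg_k w) η`. The first term integrates to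
something tending to zero, because `f_k → f` uniformly while `(Dg_k w) η` is bounded by
`K ‖w‖ sup |η|` and supported in the fixed compact set `tsupport η`. For the second term, integrate
by parts against the Lipschitz, compactly supported function `φ = f η`; Rademacher's theorem makes
this valid for every Lipschitz function, so `∫ f (Dg_k w) η = ∫ g_k ψ` and `∫ f (Dg w) η = ∫ g ψ`
with `ψ = ∂_{-w} φ` bounded and compactly supported, and `∫ g_k ψ → ∫ g ψ` by uniform convergence.
-/

open scoped NNReal
open MeasureTheory Filter

open Set Function Topology
open scoped ENNReal

theorem LipschitzWith.of_tendsto {α β ι : Type*} [PseudoEMetricSpace α] [PseudoEMetricSpace β]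
    {l : Filter ι} [l.NeBot] {K : ℝ≥0} {F : ι → α → β} {f : α → β}
    (hF : ∀ i, LipschitzWith K (F i)) (h : Tendsto F l (𝓝 f)) : LipschitzWith K f :=
  (isClosed_setOfPred_lipschitzWith K).mem_of_tendsto h (Eventually.of_forall hF)

theorem LipschitzWith.exists_lipschitzWith_mul_of_hasCompactSupport {X : Type*}
    [PseudoMetricSpace X] {f η : X → ℝ} {Kf Kη : ℝ≥0} (hf : LipschitzWith Kf f)
    (hη : LipschitzWith Kη η) (hηs : HasCompactSupport η) :
    ∃ C, LipschitzWith C fun x => f x * η x := by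
  obtain ⟨A, hA⟩ := hηs.exists_bound_of_continuous hη.continuous
  obtain ⟨M, hM⟩ := IsCompact.exists_bound_of_continuousOn hηs hf.continuous.continuousOn
  refine ⟨Kf * A.toNNReal + M.toNNReal * Kη, LipschitzWith.of_dist_le_mul fun x y => ?_⟩
  wlog hy : y ∈ tsupport η generalizing x y
  · by_cases hx : x ∈ tsupport η
    · simpa only [dist_comm] using this y x hx
    · simp only [image_eq_zero_of_notMem_tsupport hx, image_eq_zero_of_notMem_tsupport hy,
        mul_zero, dist_self]
      positivity
  calc dist (f x * η x) (f y * η y) = ‖(f x - f y) * η x + f y * (η x - η y)‖ := by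
        rw [dist_eq_norm]; ring_nf
    _ ≤ ‖f x - f y‖ * ‖η x‖ + ‖f y‖ * ‖η x - η y‖ := by
        rw [← norm_mul, ← norm_mul]; exact norm_add_le _ _
    _ ≤ Kf * dist x y * A.toNNReal + M.toNNReal * (Kη * dist x y) := by
        rw [← dist_eq_norm, ← dist_eq_norm]
        gcongr
        · exact hf.dist_le_mul x y
        · exact (hA x).trans (Real.le_coe_toNNReal A)
        · exact (hM y hy).trans (Real.le_coe_toNNReal M)
        · exact hη.dist_le_mul x y
    _ = (Kf * A.toNNReal + M.toNNReal * Kη : ℝ≥0) * dist x y := by push_cast; ring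

section Derivatives

variable {𝕜 E F : Type*} [NontriviallyNormedField 𝕜] [NormedAddCommGroup E] [NormedSpace 𝕜 E]
  [NormedAddCommGroup F] [NormedSpace 𝕜 F]

theorem support_lineDeriv_subset (f : E → F) (v : E) :
    support (fun x => lineDeriv 𝕜 f x v) ⊆ tsupport f := by
  intro x hx
  by_contra h
  exact hx ((notMem_tsupport_iff_eventuallyEq.1 h).lineDeriv_eq.trans (by simp [lineDeriv]))

theorem LipschitzWith.norm_fderiv_apply_le {f : E → F} {C : ℝ≥0} (hf : LipschitzWith C f)
    (x v : E) : ‖fderiv 𝕜 f x v‖ ≤ C * ‖v‖ :=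
  (fderiv 𝕜 f x).le_of_opNorm_le (norm_fderiv_le_of_lipschitz 𝕜 hf) v

end Derivatives

theorem LipschitzWith.integral_fderiv_mul_eq {E : Type*} [NormedAddCommGroup E]
    [NormedSpace ℝ E] [FiniteDimensional ℝ E] [MeasurableSpace E] [BorelSpace E]
    {μ : Measure E} [μ.IsAddHaarMeasure] {f φ : E → ℝ} {C D : ℝ≥0}
    (hf : LipschitzWith C f) (hφ : LipschitzWith D φ) (hφs : HasCompactSupport φ) (v : E) :
    ∫ x, fderiv ℝ f x v * φ x ∂μ = ∫ x, f x * lineDeriv ℝ φ x (-v) ∂μ := by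
  calc ∫ x, fderiv ℝ f x v * φ x ∂μ = ∫ x, lineDeriv ℝ f x v * φ x ∂μ := by
        refine integral_congr_ae ?_
        filter_upwards [hf.ae_differentiableAt] with x hx
        rw [hx.lineDeriv_eq_fderiv]
    _ = ∫ x, lineDeriv ℝ φ x (-v) * f x ∂μ := hf.integral_lineDeriv_mul_eq hφ hφs v
    _ = ∫ x, f x * lineDeriv ℝ φ x (-v) ∂μ := by simp_rw [mul_comm]

section UniformLimits

variable {X ι : Type*} [MeasurableSpace X] {μ : Measure X} {l : Filter ι}
  {u : ι → X → ℝ} {v : X → ℝ} {ψ : ι → X → ℝ} {K : Set X} {M : ℝ}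

theorem TendstoUniformly.tendsto_integral_sub_mul [l.IsCountablyGenerated]
    (huv : TendstoUniformly u v l) (hu : ∀ i, AEStronglyMeasurable (u i) μ)
    (hv : AEStronglyMeasurable v μ) (hKm : MeasurableSet K) (hK : μ K ≠ ∞)
    (hψ : ∀ i, AEStronglyMeasurable (ψ i) μ) (hψM : ∀ i x, ‖ψ i x‖ ≤ M)
    (hψK : ∀ i, support (ψ i) ⊆ K) :
    Tendsto (fun i => ∫ x, (u i x - v x) * ψ i x ∂μ) l (𝓝 0) := by
  have hbound : ∀ᶠ i in l, ∀ᵐ x ∂μ, ‖(u i x - v x) * ψ i x‖ ≤ K.indicator (fun _ => M) x := by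
    filter_upwards [Metric.tendstoUniformly_iff.1 huv 1 one_pos] with i hi
    refine ae_of_all _ fun x => ?_
    by_cases hx : x ∈ K
    · rw [indicator_of_mem hx, norm_mul]
      have hclose : ‖u i x - v x‖ ≤ 1 := by
        rw [← dist_eq_norm, dist_comm]; exact (hi x).le
      exact (mul_le_of_le_one_left (norm_nonneg _) hclose).trans (hψM i x)
    · rw [indicator_of_notMem hx, notMem_support.1 fun h => hx (hψK i h)]
      simp
  have hlim : ∀ᵐ x ∂μ, Tendsto (fun i => (u i x - v x) * ψ i x) l (𝓝 0) := by
    refine ae_of_all _ fun x => ?_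
    refine Tendsto.zero_mul_isBoundedUnder_le ?_ (isBoundedUnder_of ⟨M, fun i => hψM i x⟩)
    simpa using (huv.tendsto_at x).sub_const (v x)
  simpa using tendsto_integral_filter_of_dominated_convergence _
    (Eventually.of_forall fun i => ((hu i).sub hv).mul (hψ i)) hbound
    ((integrable_indicator_iff hKm).2 (integrableOn_const hK)) hlim

variable [TopologicalSpace X] [T2Space X] [OpensMeasurableSpace X] [IsFiniteMeasureOnCompacts μ]

theorem Continuous.integrable_mul_of_support_subset {h φ : X → ℝ} (hh : Continuous h)
    (hK : IsCompact K) (hφ : AEStronglyMeasurable φ μ) (hφM : ∀ x, ‖φ x‖ ≤ M)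
    (hφK : support φ ⊆ K) : Integrable (fun x => h x * φ x) μ := by
  have hφK' : IntegrableOn φ K μ :=
    Measure.integrableOn_of_bounded hK.measure_lt_top.ne hφ (ae_of_all _ hφM)
  exact (integrableOn_iff_integrable_of_support_subset
    ((support_mul_subset_right _ _).trans hφK)).1 (hφK'.continuousOn_mul hh.continuousOn hK)

theorem TendstoUniformly.tendsto_integral_mul_sub_integral_mul [l.IsCountablyGenerated]
    (huv : TendstoUniformly u v l) (hu : ∀ i, Continuous (u i)) (hv : Continuous v)
    (hK : IsCompact K) (hψ : ∀ i, AEStronglyMeasurable (ψ i) μ) (hψM : ∀ i x, ‖ψ i x‖ ≤ M)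
    (hψK : ∀ i, support (ψ i) ⊆ K) :
    Tendsto (fun i => ∫ x, u i x * ψ i x ∂μ - ∫ x, v x * ψ i x ∂μ) l (𝓝 0) := by
  refine (huv.tendsto_integral_sub_mul (fun i => (hu i).aestronglyMeasurable)
    hv.aestronglyMeasurable hK.measurableSet hK.measure_lt_top.ne hψ hψM hψK).congr fun i => ?_
  rw [← integral_sub ((hu i).integrable_mul_of_support_subset hK (hψ i) (hψM i) (hψK i))
    (hv.integrable_mul_of_support_subset hK (hψ i) (hψM i) (hψK i))]
  simp_rw [sub_mul]

end UniformLimits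

theorem tendsto_integral_mul_fderiv_of_equiLipschitz_general (n : ℕ) (K : ℝ≥0)
    (fk gk : ℕ → EuclideanSpace ℝ (Fin n) → ℝ)
    (f g : EuclideanSpace ℝ (Fin n) → ℝ)
    (hfLip : ∀ k, LipschitzWith K (fk k)) (hgLip : ∀ k, LipschitzWith K (gk k))
    (hfconv : TendstoUniformly fk f atTop) (hgconv : TendstoUniformly gk g atTop) :
    ∀ (η : EuclideanSpace ℝ (Fin n) → ℝ), ContDiff ℝ (⊤ : ℕ∞) η → HasCompactSupport η →
      ∀ w : EuclideanSpace ℝ (Fin n),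
        Tendsto (fun k => ∫ x, fk k x * fderiv ℝ (gk k) x w * η x)
          atTop (nhds (∫ x, f x * fderiv ℝ g x w * η x)) := by
  intro η hη hηs w
  have hfL : LipschitzWith K f := .of_tendsto hfLip (tendsto_pi_nhds.2 hfconv.tendsto_at)
  have hgL : LipschitzWith K g := .of_tendsto hgLip (tendsto_pi_nhds.2 hgconv.tendsto_at)
  obtain ⟨A, hA⟩ := hηs.exists_bound_of_continuous hη.continuous
  obtain ⟨Cη, hηL⟩ := hη.lipschitzWith_of_hasCompactSupport hηs (by simp)
  obtain ⟨Cφ, hφL⟩ := hfL.exists_lipschitzWith_mul_of_hasCompactSupport hηL hηs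
  have hφs : HasCompactSupport fun x => f x * η x := hηs.mul_left
  set ψ := fun x => lineDeriv ℝ (fun x => f x * η x) x (-w)
  have hparts : ∀ {h}, LipschitzWith K h →
      ∫ x, f x * fderiv ℝ h x w * η x = ∫ x, h x * ψ x := fun hh => by
    rw [← hh.integral_fderiv_mul_eq hφL hφs w]
    congr 1 with x
    ring
  have hfk : Tendsto (fun k => (∫ x, fk k x * (fderiv ℝ (gk k) x w * η x))
      - ∫ x, f x * (fderiv ℝ (gk k) x w * η x)) atTop (𝓝 0) :=
    hfconv.tendsto_integral_mul_sub_integral_mul (μ := volume) (fun k => (hfLip k).continuous)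
      hfL.continuous hηs
      (fun k => (measurable_fderiv_apply_const ℝ (gk k) w).aestronglyMeasurable.mul
        hη.continuous.aestronglyMeasurable)
      (fun k x => norm_mul_le_of_le ((hgLip k).norm_fderiv_apply_le x w) (hA x))
      (fun _ => (support_mul_subset_right _ _).trans (subset_tsupport η))
  have hgk : Tendsto (fun k => (∫ x, gk k x * ψ x) - ∫ x, g x * ψ x) atTop (𝓝 0) :=
    hgconv.tendsto_integral_mul_sub_integral_mul (μ := volume) (ψ := fun _ => ψ)
      (fun k => (hgLip k).continuous) hgL.continuous hφs
      (fun _ => aestronglyMeasurable_lineDeriv hφL.continuous _)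
      (fun _ _ => norm_lineDeriv_le_of_lipschitz ℝ hφL) (fun _ => support_lineDeriv_subset _ _)
  rw [← tendsto_sub_nhds_zero_iff, hparts hgL]
  refine (add_zero (0 : ℝ) ▸ hfk.add hgk).congr fun k => ?_
  rw [← hparts (hgLip k)]
  simp_rw [mul_assoc]
  ring

/-- Key convergence step in Proposition 2.4: for equi-Lipschitz `C¹`
sequences `f_k → f` and `g_k → g` uniformly, the integrals
`∫ f_k · (Dg_k w) · η` converge to `∫ f · (Dg w) · η` for every smooth compactly
supported test function `η` and every direction `w`. -/
theorem tendsto_integral_mul_fderiv_of_equiLipschitz (n : ℕ) (K : ℝ≥0) (hK : 0 < K)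
    (fk gk : ℕ → EuclideanSpace ℝ (Fin n) → ℝ)
    (f g : EuclideanSpace ℝ (Fin n) → ℝ)
    (hfC1 : ∀ k, ContDiff ℝ 1 (fk k)) (hgC1 : ∀ k, ContDiff ℝ 1 (gk k))
    (hfLip : ∀ k, LipschitzWith K (fk k)) (hgLip : ∀ k, LipschitzWith K (gk k))
    (hfconv : TendstoUniformly fk f atTop) (hgconv : TendstoUniformly gk g atTop) :
    ∀ (η : EuclideanSpace ℝ (Fin n) → ℝ), ContDiff ℝ (⊤ : ℕ∞) η → HasCompactSupport η →
      ∀ w : EuclideanSpace ℝ (Fin n),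
        Tendsto (fun k => ∫ x, fk k x * fderiv ℝ (gk k) x w * η x)
          atTop (nhds (∫ x, f x * fderiv ℝ g x w * η x)) :=
  tendsto_integral_mul_fderiv_of_equiLipschitz_general n K fk gk f g hfLip hgLip hfconv hgconv
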